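/- For n ≥ 3, the lower rank of the endomorphism semigroup of the Brandt semigroup B_n equals 4: r_2(End(B_n)) = 4. -/
import Mathlib


/-- The underlying set of the Brandt semigroup `B_n`: pairs `(i,j)` with
`i, j ∈ [n]` together with the zero element `θ` (represented by `none`). -/
abbrev Brandt (n : ℕ) := Option (Fin n × Fin n)

/-- The Brandt semigroup operation: `(i,j) + (k,l) = (i,l)` if `j = k`, and `θ`
otherwise; `θ` is a two-sided zero. -/
def bmul {n : ℕ} : Brandt n → Brandt n → Brandt n
  | some (i, j), some (k, l) => if j = k then some (i, l) else none
  | _, _ => none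

instance {n : ℕ} : Mul (Brandt n) := ⟨bmul⟩

@[simp] lemma brandt_mul_def {n : ℕ} (x y : Brandt n) : x * y = bmul x y := rfl

/-- A map `B_n → B_n` is a (semigroup) endomorphism if it preserves the operation. -/
def IsEndo {n : ℕ} (f : Brandt n → Brandt n) : Prop :=
  ∀ x y : Brandt n, f (x * y) = f x * f y

/-- `End(B_n)`: the semigroup (indeed monoid) of endomorphisms of `B_n`.
Multiplication `f * g` is "first `f`, then `g`", the composition convention of
the paper. -/
def BrandtEnd (n : ℕ) := {f : Brandt n → Brandt n // IsEndo f}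

instance {n : ℕ} : Monoid (BrandtEnd n) where
  mul f g := ⟨g.1 ∘ f.1, fun x y =>
    (congrArg g.1 (f.2 x y)).trans (g.2 _ _)⟩
  one := ⟨id, fun _ _ => rfl⟩
  mul_assoc f g h := rfl
  one_mul f := rfl
  mul_one f := rfl

namespace BTest

open Equiv

variable {n : ℕ}

@[simp] lemma bmul_none (a : Brandt n) : bmul a none = none := by
  rcases a with _ | ⟨i, j⟩ <;> rfl

@[simp] lemma none_bmul (a : Brandt n) : bmul none a = none := rfl

@[simp] lemma bmul_some (i j k l : Fin n) :
    bmul (some (i, j)) (some (k, l)) = if j = k then some (i, l) else none := rfl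

instance : Finite (BrandtEnd n) := by unfold BrandtEnd; infer_instance

lemma BE_ext {f g : BrandtEnd n} (h : f.1 = g.1) : f = g := Subtype.ext h

lemma mul_val (f g : BrandtEnd n) : (f * g).1 = g.1 ∘ f.1 := rfl

def autFun (σ : Perm (Fin n)) : Brandt n → Brandt n
  | some (i, j) => some (σ i, σ j)
  | none => none

lemma autFun_isEndo (σ : Perm (Fin n)) : IsEndo (autFun σ) := by
  rintro (_ | ⟨i, j⟩) (_ | ⟨k, l⟩)
  · rfl
  · rfl
  · rfl
  · show autFun σ (bmul _ _) = bmul _ _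
    by_cases h : j = k
    · simp [h, autFun]
    · simp [h, autFun, fun h' => h (σ.injective h')]

def autE (σ : Perm (Fin n)) : BrandtEnd n := ⟨autFun σ, autFun_isEndo σ⟩

def czero : BrandtEnd n := ⟨fun _ => none, fun _ _ => rfl⟩

def cidem (k : Fin n) : BrandtEnd n := ⟨fun _ => some (k, k), fun _ _ => by simp⟩

lemma autE_mul_autE (σ τ : Perm (Fin n)) : autE σ * autE τ = autE (τ * σ) :=
  BE_ext (funext fun x => by rcases x with _ | ⟨i, j⟩ <;> rfl)

lemma mul_czero (f : BrandtEnd n) : f * czero = czero := rfl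

lemma mul_cidem (f : BrandtEnd n) (k : Fin n) : f * cidem k = cidem k := rfl

lemma czero_mul_autE (σ : Perm (Fin n)) : czero * autE σ = czero := rfl

lemma cidem_mul_autE (k : Fin n) (σ : Perm (Fin n)) :
    cidem k * autE σ = cidem (σ k) := rfl

lemma czero_ne_cidem (k : Fin n) : (czero : BrandtEnd n) ≠ cidem k := fun h => by
  have := congrFun (congrArg Subtype.val h) none
  simp [czero, cidem] at this

lemma autE_ne_czero (hn : 0 < n) (σ : Perm (Fin n)) : autE σ ≠ czero := fun h => by
  have := congrFun (congrArg Subtype.val h) (some (⟨0, hn⟩, ⟨0, hn⟩))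
  simp [czero, autE, autFun] at this

lemma autE_ne_cidem (σ : Perm (Fin n)) (k : Fin n) : autE σ ≠ cidem k := fun h => by
  have := congrFun (congrArg Subtype.val h) none
  simp [cidem, autE, autFun] at this

lemma autE_injective : Function.Injective (autE (n := n)) := by
  intro σ τ h
  apply Equiv.ext
  intro i
  have := congrFun (congrArg Subtype.val h) (some (i, i))
  simp only [autE, autFun, Option.some.injEq, Prod.mk.injEq] at this
  exact this.1

lemma idem_classify (x : Brandt n) (hx : x * x = x) :
    x = none ∨ ∃ k, x = some (k, k) := by
  rcases x with _ | ⟨i, j⟩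
  · exact Or.inl rfl
  · right
    by_cases h : j = i
    · exact ⟨i, by rw [h]⟩
    · simp [h] at hx

lemma classify (hn : 3 ≤ n) (f : BrandtEnd n) :
    f = czero ∨ (∃ k, f = cidem k) ∨ ∃ σ : Perm (Fin n), f = autE σ := by
  obtain ⟨g, hg⟩ := f
  have hE : ∀ i : Fin n, g (some (i, i)) * g (some (i, i)) = g (some (i, i)) := by
    intro i
    rw [← hg]
    simp
  by_cases hA : ∃ i, g (some (i, i)) = none
  · -- everything maps to none
    obtain ⟨i, hi⟩ := hA
    left
    apply BE_ext
    funext x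
    show g x = none
    have hnone : g none = none := by
      have := hg (some (i, i)) none
      simp only [brandt_mul_def, bmul_none] at this
      rw [this, hi]
      simp
    rcases x with _ | ⟨j, k⟩
    · exact hnone
    · have e1 : g (some (j, i)) = none := by
        have := hg (some (j, i)) (some (i, i))
        simp only [brandt_mul_def, bmul_some, eq_self_iff_true, if_true] at this
        rw [hi] at this
        rw [this]
        simp
      have := hg (some (j, i)) (some (i, k))
      simp only [brandt_mul_def, bmul_some, eq_self_iff_true, if_true] at this
      rw [e1] at this
      rw [this]
      simp
  · push_neg at hA
    have hA' : ∀ i : Fin n, ∃ k, g (some (i, i)) = some (k, k) := by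
      intro i
      rcases idem_classify _ (hE i) with h | h
      · exact absurd h (hA i)
      · exact h
    choose σ hσ using hA'
    set i0 : Fin n := ⟨0, by omega⟩ with hi0
    set i1 : Fin n := ⟨1, by omega⟩ with hi1
    have h01 : i0 ≠ i1 := by simp [hi0, hi1, Fin.ext_iff]
    by_cases hinj : Function.Injective σ
    · -- automorphism
      right; right
      have hnone : g none = none := by
        have := hg (some (i0, i0)) (some (i1, i1))
        simp only [brandt_mul_def, bmul_some, h01, if_false] at this
        rw [hσ, hσ] at this
        have hne : σ i0 ≠ σ i1 := fun h => h01 (hinj h)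
        rw [this]
        simp [hne]
      have key : ∀ i j : Fin n, g (some (i, j)) = some (σ i, σ j) := by
        intro i j
        have hne : g (some (i, j)) ≠ none := by
          intro h
          have := hg (some (i, j)) (some (j, i))
          simp only [brandt_mul_def, bmul_some, eq_self_iff_true, if_true] at this
          rw [h, hσ i] at this
          simp at this
        rcases hx : g (some (i, j)) with _ | ⟨a, b⟩
        · exact absurd hx hne
        · have hl := hg (some (i, i)) (some (i, j))
          simp only [brandt_mul_def, bmul_some, eq_self_iff_true, if_true] at hl
          rw [hx, hσ i] at hl
          have hr := hg (some (i, j)) (some (j, j))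
          simp only [brandt_mul_def, bmul_some, eq_self_iff_true, if_true] at hr
          rw [hx, hσ j] at hr
          by_cases ha : σ i = a
          · by_cases hb : b = σ j
            · simp [ha, hb]
            · simp [hb] at hr
          · simp [ha] at hl
      have hbij : Function.Bijective σ := Finite.injective_iff_bijective.mp hinj
      refine ⟨Equiv.ofBijective σ hbij, BE_ext (funext fun x => ?_)⟩
      rcases x with _ | ⟨i, j⟩
      · exact hnone
      · exact key i j
    · -- constant idempotent
      right; left
      rw [Function.not_injective_iff] at hinj
      obtain ⟨i, j, hij, hne⟩ := hinj
      set k := σ i with hk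
      have hnone : g none = some (k, k) := by
        have := hg (some (i, i)) (some (j, j))
        simp only [brandt_mul_def, bmul_some, hne, if_false] at this
        rw [hσ, hσ, ← hij] at this
        rw [this]
        simp [← hk]
      refine ⟨k, BE_ext (funext fun x => ?_)⟩
      show g x = some (k, k)
      have := hg x none
      simp only [brandt_mul_def, bmul_none] at this
      rw [hnone] at this
      rcases hx : g x with _ | ⟨a, b⟩
      · rw [hx] at this; simp at this
      · rw [hx] at this
        simp only [bmul_some] at this
        by_cases hb : b = k
        · rw [if_pos hb] at this
          obtain ⟨ha, -⟩ := Option.some.injEq _ _ ▸ this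
          injection this with this'
          obtain ⟨h1, h2⟩ := Prod.mk.injEq .. ▸ this'
          rw [hb, h1]
        · rw [if_neg hb] at this
          exact absurd this (by simp)

lemma ncard_four {α : Type*} [Finite α] {a b c d : α} (hab : a ≠ b) (hac : a ≠ c)
    (had : a ≠ d) (hbc : b ≠ c) (hbd : b ≠ d) (hcd : c ≠ d) :
    ({a, b, c, d} : Set α).ncard = 4 := by
  rw [Set.ncard_insert_of_notMem (by simp [hab, hac, had]),
      Set.ncard_insert_of_notMem (by simp [hbc, hbd]),
      Set.ncard_insert_of_notMem (by simp [hcd]),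
      Set.ncard_singleton]

lemma lower_bound (hn : 3 ≤ n) (U : Set (BrandtEnd n))
    (hU : Subsemigroup.closure U = ⊤) : 4 ≤ U.ncard := by
  have hmem : ∀ x : BrandtEnd n, x ∈ Subsemigroup.closure U := fun x =>
    hU ▸ Subsemigroup.mem_top x
  have hnpos : 0 < n := by omega
  have hcz : czero ∈ U := by
    by_contra h
    set S : Subsemigroup (BrandtEnd n) :=
      { carrier := {x | x ≠ czero}
        mul_mem' := by
          intro a b ha hb
          simp only [Set.mem_setOf_eq] at *
          rcases classify hn b with rfl | ⟨l, rfl⟩ | ⟨τ, rfl⟩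
          · exact absurd rfl hb
          · rw [mul_cidem]; exact fun he => czero_ne_cidem l he.symm
          · rcases classify hn a with rfl | ⟨k, rfl⟩ | ⟨σ, rfl⟩
            · exact absurd rfl ha
            · rw [cidem_mul_autE]; exact fun he => czero_ne_cidem _ he.symm
            · rw [autE_mul_autE]; exact autE_ne_czero hnpos _ }
    have hle : Subsemigroup.closure U ≤ S :=
      Subsemigroup.closure_le.mpr (fun u hu he => h (he ▸ hu))
    exact (hle (hmem czero)) rfl
  have hci : ∃ k, cidem k ∈ U := by
    by_contra h
    push_neg at h
    set S : Subsemigroup (BrandtEnd n) :=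
      { carrier := {x | x = czero ∨ ∃ σ, x = autE σ}
        mul_mem' := by
          intro a b ha hb
          simp only [Set.mem_setOf_eq] at *
          rcases hb with rfl | ⟨τ, rfl⟩
          · exact Or.inl (mul_czero a)
          · rcases ha with rfl | ⟨σ, rfl⟩
            · exact Or.inl (czero_mul_autE τ)
            · exact Or.inr ⟨τ * σ, autE_mul_autE σ τ⟩ }
    have hle : Subsemigroup.closure U ≤ S := Subsemigroup.closure_le.mpr (fun u hu => by
      rcases classify hn u with rfl | ⟨k, rfl⟩ | ⟨σ, rfl⟩
      · exact Or.inl rfl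
      · exact absurd hu (h k)
      · exact Or.inr ⟨σ, rfl⟩)
    rcases hle (hmem (cidem ⟨0, hnpos⟩)) with he | ⟨σ, he⟩
    · exact czero_ne_cidem _ he.symm
    · exact autE_ne_cidem σ _ he.symm
  have hauts : ∃ σ τ : Perm (Fin n), σ ≠ τ ∧ autE σ ∈ U ∧ autE τ ∈ U := by
    by_contra h
    have h' : ∀ σ τ : Perm (Fin n), autE σ ∈ U → autE τ ∈ U → σ = τ := fun σ τ hσ hτ => by
      by_contra hne; exact h ⟨σ, τ, hne, hσ, hτ⟩
    obtain ⟨ρ, hρ⟩ : ∃ ρ : Perm (Fin n), ∀ σ, autE σ ∈ U → σ ∈ Subgroup.zpowers ρ := by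
      by_cases hex : ∃ ρ, autE ρ ∈ U
      · obtain ⟨ρ, hρ⟩ := hex
        exact ⟨ρ, fun σ hσ => (h' σ ρ hσ hρ) ▸ Subgroup.mem_zpowers ρ⟩
      · exact ⟨1, fun σ hσ => absurd ⟨σ, hσ⟩ hex⟩
    set S : Subsemigroup (BrandtEnd n) :=
      { carrier := {x | x = czero ∨ (∃ k, x = cidem k) ∨
          ∃ σ ∈ Subgroup.zpowers ρ, x = autE σ}
        mul_mem' := by
          intro a b ha hb
          simp only [Set.mem_setOf_eq] at *
          rcases hb with rfl | ⟨l, rfl⟩ | ⟨τ, hτm, rfl⟩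
          · exact Or.inl (mul_czero a)
          · exact Or.inr (Or.inl ⟨l, mul_cidem a l⟩)
          · rcases ha with rfl | ⟨k, rfl⟩ | ⟨σ, hσm, rfl⟩
            · exact Or.inl (czero_mul_autE τ)
            · exact Or.inr (Or.inl ⟨τ k, cidem_mul_autE k τ⟩)
            · exact Or.inr (Or.inr ⟨τ * σ, Subgroup.mul_mem _ hτm hσm,
                autE_mul_autE σ τ⟩) }
    have hle : Subsemigroup.closure U ≤ S := Subsemigroup.closure_le.mpr (fun u hu => by
      rcases classify hn u with rfl | ⟨k, rfl⟩ | ⟨σ, rfl⟩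
      · exact Or.inl rfl
      · exact Or.inr (Or.inl ⟨k, rfl⟩)
      · exact Or.inr (Or.inr ⟨σ, hρ σ hu, rfl⟩))
    have hz : ∀ σ : Perm (Fin n), σ ∈ Subgroup.zpowers ρ := by
      intro σ
      rcases hle (hmem (autE σ)) with he | ⟨k, he⟩ | ⟨τ, hτm, he⟩
      · exact absurd he (autE_ne_czero hnpos σ)
      · exact absurd he (autE_ne_cidem σ k)
      · exact (autE_injective he) ▸ hτm
    set a : Fin n := ⟨0, by omega⟩ with hadef
    set b : Fin n := ⟨1, by omega⟩ with hbdef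
    set c : Fin n := ⟨2, by omega⟩ with hcdef
    have hba : b ≠ a := by simp [hadef, hbdef, Fin.ext_iff]
    have hbc : b ≠ c := by simp [hbdef, hcdef, Fin.ext_iff]
    have hca : c ≠ a := by simp [hadef, hcdef, Fin.ext_iff]
    have hcb : c ≠ b := by simp [hbdef, hcdef, Fin.ext_iff]
    have hcomm : Equiv.swap a b * Equiv.swap a c = Equiv.swap a c * Equiv.swap a b := by
      obtain ⟨m1, e1⟩ := Subgroup.mem_zpowers_iff.mp (hz (Equiv.swap a b))
      obtain ⟨m2, e2⟩ := Subgroup.mem_zpowers_iff.mp (hz (Equiv.swap a c))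
      rw [← e1, ← e2, ← zpow_add, ← zpow_add, add_comm]
    have heval := congrArg (fun π : Perm (Fin n) => π a) hcomm
    simp only [Equiv.Perm.mul_apply, Equiv.swap_apply_left] at heval
    rw [Equiv.swap_apply_of_ne_of_ne hca hcb, Equiv.swap_apply_of_ne_of_ne hba hbc] at heval
    exact hcb heval
  obtain ⟨k, hk⟩ := hci
  obtain ⟨σ, τ, hst, hσ, hτ⟩ := hauts
  have hsub : ({czero, cidem k, autE σ, autE τ} : Set (BrandtEnd n)) ⊆ U := by
    intro x hx
    rcases hx with rfl | rfl | rfl | rfl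
    · exact hcz
    · exact hk
    · exact hσ
    · exact hτ
  calc 4 = ({czero, cidem k, autE σ, autE τ} : Set (BrandtEnd n)).ncard := by
        rw [ncard_four (czero_ne_cidem k) (fun h => autE_ne_czero hnpos σ h.symm)
          (fun h => autE_ne_czero hnpos τ h.symm) (fun h => autE_ne_cidem σ k h.symm)
          (fun h => autE_ne_cidem τ k h.symm) (fun h => hst (autE_injective h))]
    _ ≤ U.ncard := Set.ncard_le_ncard hsub U.toFinite

lemma upper_bound (n : ℕ) (hn : 3 ≤ n) :
    ∃ U : Set (BrandtEnd n), Subsemigroup.closure U = ⊤ ∧ U.ncard = 4 := by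
  obtain ⟨m, rfl⟩ : ∃ m, n = m + 3 := ⟨n - 3, by omega⟩
  set r : Perm (Fin (m + 3)) := finRotate (m + 3) with hrdef
  set s : Perm (Fin (m + 3)) := Equiv.swap 0 1 with hsdef
  set U : Set (BrandtEnd (m + 3)) := {autE s, autE r, czero, cidem 0} with hUdef
  set C := Subsemigroup.closure U with hCdef
  have hsU : autE s ∈ C := Subsemigroup.subset_closure (by simp [hUdef])
  have hrU : autE r ∈ C := Subsemigroup.subset_closure (by simp [hUdef])
  have hpow : ∀ (σ : Perm (Fin (m + 3))) (k : ℕ), autE σ ∈ C → autE (σ ^ (k + 1)) ∈ C := by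
    intro σ k h
    induction k with
    | zero => simpa using h
    | succ k ih =>
      have hmm := C.mul_mem h ih
      rw [autE_mul_autE, ← pow_succ] at hmm
      exact hmm
  have hone : autE (1 : Perm (Fin (m + 3))) ∈ C := by
    have hmm := C.mul_mem hsU hsU
    rwa [autE_mul_autE, hsdef, Equiv.swap_mul_self] at hmm
  have hinv : ∀ σ : Perm (Fin (m + 3)), autE σ ∈ C → autE σ⁻¹ ∈ C := by
    intro σ h
    have ho : 0 < orderOf σ := orderOf_pos σ
    have key : σ ^ (2 * orderOf σ - 1) = σ⁻¹ := by
      apply eq_inv_of_mul_eq_one_left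
      have h2 : σ ^ (2 * orderOf σ - 1) * σ = σ ^ (2 * orderOf σ) := by
        rw [← pow_succ]
        congr 1
        omega
      rw [h2, mul_comm, pow_mul, pow_orderOf_eq_one, one_pow]
    have h3 : 2 * orderOf σ - 1 = (2 * orderOf σ - 2) + 1 := by omega
    have h4 := hpow σ (2 * orderOf σ - 2) h
    rwa [← h3, key] at h4
  have hT : ∀ σ : Perm (Fin (m + 3)), autE σ ∈ C := by
    set T : Subgroup (Perm (Fin (m + 3))) :=
      { carrier := {σ | autE σ ∈ C}
        mul_mem' := by
          intro a b ha hb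
          simp only [Set.mem_setOf_eq] at *
          have hmm := C.mul_mem hb ha
          rwa [autE_mul_autE] at hmm
        one_mem' := hone
        inv_mem' := by
          intro a ha
          exact hinv a ha } with hTdef
    have hcyc : (finRotate (m + 3)).IsCycle := isCycle_finRotate_of_le (by omega)
    have hsupp : (finRotate (m + 3)).support = Finset.univ := support_finRotate_of_le (by omega)
    have hr0 : r 0 = 1 := by rw [hrdef]; simp
    have hgen : Subgroup.closure ({r, Equiv.swap 0 (r 0)} : Set (Perm (Fin (m + 3)))) = ⊤ := by
      rw [hrdef]
      exact Equiv.Perm.closure_cycle_adjacent_swap hcyc hsupp 0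
    have hle : (⊤ : Subgroup (Perm (Fin (m + 3)))) ≤ T := by
      rw [← hgen]
      apply (Subgroup.closure_le T).mpr
      rintro x (rfl | rfl)
      · exact hrU
      · show autE (Equiv.swap 0 (r 0)) ∈ C
        rw [hr0]
        exact hsU
    exact fun σ => hle (Subgroup.mem_top σ)
  have hall : ∀ x : BrandtEnd (m + 3), x ∈ C := by
    intro x
    rcases classify (by omega) x with rfl | ⟨k, rfl⟩ | ⟨σ, rfl⟩
    · exact Subsemigroup.subset_closure (by simp [hUdef])
    · have h1 : cidem (0 : Fin (m + 3)) ∈ C := Subsemigroup.subset_closure (by simp [hUdef])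
      have h2 := C.mul_mem h1 (hT (Equiv.swap 0 k))
      rwa [cidem_mul_autE, Equiv.swap_apply_left] at h2
    · exact hT σ
  refine ⟨U, eq_top_iff.mpr fun x _ => hall x, ?_⟩
  have hnpos : 0 < m + 3 := by omega
  have hsr : s ≠ r := by
    intro h
    have heval := congrArg (fun π : Perm (Fin (m + 3)) => π 1) h
    rw [hsdef, hrdef] at heval
    simp only [Equiv.swap_apply_right, finRotate_succ_apply] at heval
    have : ((1 : Fin (m + 3)) + 1).val = 2 := by
      simp [Fin.val_add, Fin.val_one', Nat.mod_eq_of_lt]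
    rw [Fin.ext_iff] at heval
    rw [this] at heval
    simp at heval
  rw [hUdef]
  exact ncard_four (fun h => hsr (autE_injective h)) (autE_ne_czero hnpos s)
    (autE_ne_cidem s 0) (autE_ne_czero hnpos r) (autE_ne_cidem r 0) (czero_ne_cidem 0)

end BTest

/-- For `n ≥ 3`, the lower rank of `End(B_n)` (the minimum cardinality of a
generating subset) equals `4`. -/
theorem lower_rank_endBn (n : ℕ) (hn : 3 ≤ n) :
    IsLeast {k : ℕ | ∃ U : Set (BrandtEnd n),
      Subsemigroup.closure U = ⊤ ∧ U.ncard = k} 4 := by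
  constructor
  · exact BTest.upper_bound n hn
  · rintro k ⟨U, hU, rfl⟩
    exact BTest.lower_bound hn U hU
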